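/- arXiv:2206.08580 — 2 statements merged into one kernel-verified Lean document; each statement's English description precedes it below -/
import Mathlib

section
/- Let m ≥ 3, n ≥ 2 and k ≥ 1, and write λ = 2k. Let N^b(m,r) denote the number of proper colorings of the signed book graph B^{uv}(m,r) with color set {−k,…,−1,1,…,k}. Then N^b(m,n) = (λ−1)·γ_{m−1}(λ)·N^b(m,n−1) + (−1)^m·λ·(λ−2)·γ_m(λ)^{n−1}. -/
/-!
Colour `u` and `v` first: with only `uv` negative, a pair of colours `(a, b)` is admissible iff
`a ≠ -b`. The pages are then independent, and each is a proper colouring of the path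
`u_1 … u_{m-2}` whose ends avoid `a` and `b`; conditioning on the last vertex shows there are
`γ_m(λ) + [a = b] (-1)^(m-1)` of them. Summing over the `λ` choices of `a`, with `b = a` or one of
the `λ - 2` colours `b ≠ ±a`, gives `N^b(m,n) = λ (γ_m(λ) + (-1)^(m-1))^n + λ (λ-2) γ_m(λ)^n`,
and the recursion follows from `(λ - 1) γ_{m-1}(λ) = γ_m(λ) + (-1)^(m-1)`.
-/

/-- Vertices of the book graph `B(m,n)`: `Sum.inl false` is `u`, `Sum.inl true` is `v`,
and `Sum.inr (i, j)` is the vertex `u_{j+1}^{i+1}`. -/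
abbrev BookVertex (m n : ℕ) := Bool ⊕ (Fin n × Fin (m - 2))

/-- Adjacency relation of the book graph `B(m,n)`. -/
def bookAdj (m n : ℕ) : BookVertex m n → BookVertex m n → Prop
  | Sum.inl a, Sum.inl b => a ≠ b
  | Sum.inl false, Sum.inr (_, j) => j.val = 0
  | Sum.inl true, Sum.inr (_, j) => j.val = m - 3
  | Sum.inr (_, j), Sum.inl false => j.val = 0
  | Sum.inr (_, j), Sum.inl true => j.val = m - 3
  | Sum.inr (i, j), Sum.inr (i', j') => i = i' ∧ (j.val + 1 = j'.val ∨ j'.val + 1 = j.val)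

/-- The signature `σ_l` of `B(m,n)`: exactly the edges `u u_1^1, …, u u_1^l` are negative. -/
def sigmaL (m n l : ℕ) : BookVertex m n → BookVertex m n → ℤ
  | Sum.inl false, Sum.inr (i, j) => if j.val = 0 ∧ i.val < l then -1 else 1
  | Sum.inr (i, j), Sum.inl false => if j.val = 0 ∧ i.val < l then -1 else 1
  | _, _ => 1

/-- The signature of `B^{uv}(m,n)`: exactly the edge `uv` is negative. -/
def sigmaUV (m n : ℕ) : BookVertex m n → BookVertex m n → ℤ
  | Sum.inl _, Sum.inl _ => -1
  | _, _ => 1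

/-- `γ_m(x) = ∑_{i=0}^{m-2} (-1)^i (x-1)^{m-2-i}`. -/
def gammaP (m : ℕ) (x : ℤ) : ℤ := ∑ i ∈ Finset.range (m - 1), (-1) ^ i * (x - 1) ^ (m - 2 - i)

/-- The number of zero-free proper colorings of the signed book graph `B^{uv}(m,r)`
(only the edge `uv` negative) with color set `{-k, …, -1, 1, …, k}`. -/
noncomputable def NbColUV (m r k : ℕ) : ℕ :=
  Nat.card {c : BookVertex m r → ℤ //
    (∀ x, c x ≠ 0 ∧ |c x| ≤ (k : ℤ)) ∧
    ∀ x y, bookAdj m r x y → c x ≠ sigmaUV m r x y * c y}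

open Finset

lemma gammaP_three (x : ℤ) : gammaP 3 x = x - 2 := by
  norm_num [gammaP, sum_range_succ, ← sub_eq_add_neg, sub_sub]

lemma gammaP_add_three (M : ℕ) (x : ℤ) :
    gammaP (M + 3) x = (x - 1) * gammaP (M + 2) x - (-1) ^ M := by
  have hterm : ∀ i ∈ range (M + 1),
      (-1) ^ i * (x - 1) ^ (M + 1 - i) = (x - 1) * ((-1) ^ i * (x - 1) ^ (M - i)) := by
    intro i hi
    rw [Nat.sub_add_comm (Nat.le_of_lt_succ (mem_range.1 hi)), pow_succ]
    ring
  simp only [gammaP, Nat.add_sub_cancel, show M + 3 - 1 = M + 1 + 1 from rfl,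
    show M + 3 - 2 = M + 1 from rfl, show M + 2 - 1 = M + 1 from rfl, sum_range_succ _ (M + 1),
    sum_congr rfl hterm, mul_sum, Nat.sub_self, pow_zero, mul_one, pow_succ]
  ring

/-- Colourings of the interior `u_1, …, u_{m-2}` of a page whose ends are joined to vertices
coloured `a` and `b`; here `t = m - 3`. -/
abbrev PathColoring (α : Type*) (t : ℕ) (a b : α) :=
  {p : Fin (t + 1) → α // p 0 ≠ a ∧ (∀ j : Fin t, p j.castSucc ≠ p j.succ) ∧ p (Fin.last t) ≠ b}

section PathColoring

variable {α : Type*}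

def pathColoringZeroEquiv (a b : α) : PathColoring α 0 a b ≃ {x : α // x ≠ a ∧ x ≠ b} where
  toFun p := ⟨p.1 0, p.2.1, p.2.2.2⟩
  invFun x := ⟨fun _ => x.1, x.2.1, finZeroElim, x.2.2⟩
  left_inv p := Subtype.ext <| funext fun j => by rw [Fin.fin_one_eq_zero j]
  right_inv _ := rfl

def pathColoringSuccEquiv (t : ℕ) (a b : α) :
    PathColoring α (t + 1) a b ≃ Σ d : {d : α // d ≠ b}, PathColoring α t a d where
  toFun p := ⟨⟨p.1 (Fin.last _), p.2.2.2⟩, Fin.init p.1, p.2.1,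
    fun j => p.2.2.1 j.castSucc, p.2.2.1 (Fin.last t)⟩
  invFun q := ⟨Fin.snoc q.2.1 q.1.1,
    by rw [← Fin.castSucc_zero (n := t + 1), Fin.snoc_castSucc]; exact q.2.2.1,
    Fin.lastCases (by rw [Fin.succ_last, Fin.snoc_castSucc, Fin.snoc_last]; exact q.2.2.2.2)
      (fun j => by rw [Fin.succ_castSucc, Fin.snoc_castSucc, Fin.snoc_castSucc]; exact q.2.2.2.1 j),
    by rw [Fin.snoc_last]; exact q.1.2⟩
  left_inv p := Subtype.ext (Fin.snoc_init_self p.1)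
  right_inv q := Sigma.subtype_ext (Subtype.ext (Fin.snoc_last (α := fun _ => α) _ _))
    (Fin.init_snoc (α := fun _ => α) q.1.1 q.2.1)

variable [Fintype α] [DecidableEq α]

lemma card_pathColoring (t : ℕ) (a b : α) :
    (Fintype.card (PathColoring α t a b) : ℤ) =
      gammaP (t + 3) (Fintype.card α) + if a = b then (-1) ^ t else 0 := by
  induction t generalizing b with
  | zero =>
    have hfilter : univ.filter (fun x => x ≠ a ∧ x ≠ b) = (univ.erase a).erase b := by
      ext; simp [and_comm]
    rw [Fintype.card_congr (pathColoringZeroEquiv a b), Fintype.card_subtype, hfilter,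
      gammaP_three]
    split_ifs with hab
    · subst hab
      rw [erase_idem, cast_card_erase_of_mem (mem_univ a), card_univ]
      ring
    · rw [cast_card_erase_of_mem (mem_erase.2 ⟨Ne.symm hab, mem_univ b⟩),
        cast_card_erase_of_mem (mem_univ a), card_univ]
      ring
  | succ t ih =>
    rw [Fintype.card_congr (pathColoringSuccEquiv t a b), Fintype.card_sigma, Nat.cast_sum,
      ← sum_subtype (univ.erase b) (by simp) (fun d => (Fintype.card (PathColoring α t a d) : ℤ))]
    simp only [ih, sum_add_distrib, sum_const, sum_ite_eq, mem_erase, mem_univ, and_true,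
      nsmul_eq_mul, cast_card_erase_of_mem (mem_univ b), card_univ, ne_eq, ite_not,
      gammaP_add_three (t + 1)]
    split_ifs <;> ring

end PathColoring

lemma sum_erase_ite_eq {α R : Type*} [Fintype α] [DecidableEq α] [CommRing R] {a a' : α}
    (h : a' ≠ a) (A B : R) :
    ∑ b ∈ univ.erase a', (if a = b then A else B) = A + (Fintype.card α - 2) * B := by
  rw [sum_erase_eq_sub (mem_univ _), if_neg h.symm, sum_ite, filter_eq, filter_ne, sum_const,
    sum_const, if_pos (mem_univ a), card_singleton, one_smul, nsmul_eq_mul,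
    cast_card_erase_of_mem (mem_univ a), card_univ]
  ring

noncomputable def colorSet (k : ℕ) : Finset ℤ := (Icc (-(k : ℤ)) k).erase 0

lemma mem_colorSet {k : ℕ} {x : ℤ} : x ∈ colorSet k ↔ x ≠ 0 ∧ |x| ≤ k := by
  simp [colorSet, abs_le]

lemma card_colorSet (k : ℕ) : #(colorSet k) = 2 * k := by
  rw [colorSet, card_erase_of_mem (by simp), Int.card_Icc]
  omega

lemma neg_mem_colorSet {k : ℕ} {x : ℤ} (hx : x ∈ colorSet k) : -x ∈ colorSet k := by
  rw [mem_colorSet, abs_neg, neg_ne_zero]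
  exact mem_colorSet.1 hx

lemma ne_sigmaUV_mul_symm {m n : ℕ} (c : BookVertex m n → ℤ) :
    ∀ x y, c x ≠ sigmaUV m n x y * c y → c y ≠ sigmaUV m n y x * c x := by
  rintro (_ | _) (_ | _) h <;> simp only [sigmaUV] at h ⊢ <;> omega

lemma forall_bookAdj_iff {M n : ℕ} {R : BookVertex (M + 3) n → BookVertex (M + 3) n → Prop}
    (hR : ∀ x y, R x y → R y x) :
    (∀ x y, bookAdj (M + 3) n x y → R x y) ↔
      R (.inl false) (.inl true) ∧
        ∀ i, R (.inr (i, (0 : Fin (M + 1)))) (.inl false) ∧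
          (∀ j : Fin M, R (.inr (i, j.castSucc)) (.inr (i, j.succ))) ∧
          R (.inr (i, Fin.last M)) (.inl true) := by
  constructor
  · intro h
    refine ⟨h _ _ Bool.false_ne_true, fun i => ⟨h _ _ rfl, fun j => h _ _ ⟨rfl, .inl rfl⟩, h _ _ ?_⟩⟩
    simp [bookAdj]
  · have consecutive {j j' : Fin (M + 1)} (h : j.val + 1 = j'.val) :
        ∃ l : Fin M, j = l.castSucc ∧ j' = l.succ :=
      ⟨⟨j, by omega⟩, rfl, Fin.ext (by simp [h])⟩
    rintro ⟨huv, hpage⟩ ((_ | _) | ⟨i, j⟩) ((_ | _) | ⟨i', j'⟩) hxy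
    · exact absurd rfl hxy
    · exact huv
    · obtain rfl : j' = (0 : Fin (M + 1)) := Fin.ext hxy
      exact hR _ _ (hpage i').1
    · exact hR _ _ huv
    · exact absurd rfl hxy
    · obtain rfl : j' = Fin.last M := Fin.ext hxy
      exact hR _ _ (hpage i').2.2
    · obtain rfl : j = (0 : Fin (M + 1)) := Fin.ext hxy
      exact (hpage i).1
    · obtain rfl : j = Fin.last M := Fin.ext hxy
      exact (hpage i).2.2
    · obtain ⟨rfl, h | h⟩ := hxy
      · obtain ⟨l, rfl, rfl⟩ := consecutive h
        exact (hpage i).2.1 l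
      · obtain ⟨l, rfl, rfl⟩ := consecutive h
        exact hR _ _ ((hpage i).2.1 l)

def bookColoringEquiv (M n k : ℕ) :
    {c : BookVertex (M + 3) n → ℤ // (∀ x, c x ≠ 0 ∧ |c x| ≤ k) ∧
      ∀ x y, bookAdj (M + 3) n x y → c x ≠ sigmaUV (M + 3) n x y * c y} ≃
    Σ ab : {ab : colorSet k × colorSet k // (ab.1 : ℤ) ≠ -ab.2},
      Fin n → PathColoring (colorSet k) M ab.1.1 ab.1.2 where
  toFun c :=
    have h := (forall_bookAdj_iff (ne_sigmaUV_mul_symm c.1)).1 c.2.2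
    ⟨⟨(⟨c.1 (.inl false), mem_colorSet.2 (c.2.1 _)⟩, ⟨c.1 (.inl true), mem_colorSet.2 (c.2.1 _)⟩),
      by simpa [sigmaUV] using h.1⟩,
     fun i => ⟨fun j => ⟨c.1 (.inr (i, j)), mem_colorSet.2 (c.2.1 _)⟩, by
        simpa only [sigmaUV, one_mul, ne_eq, Subtype.mk.injEq] using h.2 i⟩⟩
  invFun s :=
    ⟨fun | .inl false => s.1.1.1 | .inl true => s.1.1.2 | .inr (i, j) => (s.2 i).1 j,
      fun | .inl false => mem_colorSet.1 s.1.1.1.2 | .inl true => mem_colorSet.1 s.1.1.2.2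
          | .inr (i, j) => mem_colorSet.1 ((s.2 i).1 j).2,
      (forall_bookAdj_iff (ne_sigmaUV_mul_symm _)).2
        ⟨by simpa [sigmaUV] using s.1.2, fun i => by
          simpa only [sigmaUV, one_mul, ne_eq, Subtype.coe_inj] using (s.2 i).2⟩⟩
  left_inv c := Subtype.ext <| funext fun | .inl false | .inl true | .inr _ => rfl
  right_inv _ := rfl

lemma NbColUV_add_three (M n k : ℕ) :
    (NbColUV (M + 3) n k : ℤ) =
      2 * k * (gammaP (M + 3) (2 * k) + (-1) ^ M) ^ n +
        2 * k * (2 * k - 2) * gammaP (M + 3) (2 * k) ^ n := by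
  set γ := gammaP (M + 3) (2 * k)
  have hpages (a b : colorSet k) :
      (Fintype.card (Fin n → PathColoring (colorSet k) M a b) : ℤ) =
        if a = b then (γ + (-1) ^ M) ^ n else γ ^ n := by
    rw [Fintype.card_fun, Fintype.card_fin, Nat.cast_pow, card_pathColoring, Fintype.card_coe,
      card_colorSet, Nat.cast_mul, Nat.cast_ofNat]
    split_ifs <;> simp [γ]
  have hfiber (a : colorSet k) :
      ∑ b ∈ univ.filter (fun b : colorSet k => (a : ℤ) ≠ -b),
          (if a = b then (γ + (-1) ^ M) ^ n else γ ^ n) =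
        (γ + (-1) ^ M) ^ n + (2 * k - 2) * γ ^ n := by
    have hneg : -(a : ℤ) ∈ colorSet k := neg_mem_colorSet a.2
    have hfilter : univ.filter (fun b : colorSet k => (a : ℤ) ≠ -b) = univ.erase ⟨-a, hneg⟩ := by
      ext b
      simp only [mem_filter, mem_univ, true_and, mem_erase, and_true, ne_eq, Subtype.ext_iff]
      omega
    have hne : (⟨-a, hneg⟩ : colorSet k) ≠ a := fun h =>
      (mem_colorSet.1 a.2).1 (by linarith [congrArg Subtype.val h])
    rw [hfilter, sum_erase_ite_eq hne, Fintype.card_coe, card_colorSet]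
    push_cast
    ring
  rw [NbColUV, Nat.card_congr (bookColoringEquiv M n k), Nat.card_eq_fintype_card,
    Fintype.card_sigma, Nat.cast_sum]
  simp only [hpages]
  rw [← sum_subtype (univ.filter fun ab : colorSet k × colorSet k => (ab.1 : ℤ) ≠ -ab.2) (by simp)
      (fun ab => if ab.1 = ab.2 then (γ + (-1) ^ M) ^ n else γ ^ n),
    sum_filter, ← univ_product_univ, sum_product]
  simp only [← sum_filter, hfiber, sum_const, card_univ, Fintype.card_coe, card_colorSet,
    nsmul_eq_mul]
  push_cast
  ring

theorem statement16_general (m n : ℕ) (hm : 3 ≤ m) (hn : 2 ≤ n) (k : ℕ) :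
    (NbColUV m n k : ℤ) =
      (2 * (k : ℤ) - 1) * gammaP (m - 1) (2 * (k : ℤ)) * (NbColUV m (n - 1) k : ℤ) +
        (-1) ^ m * (2 * (k : ℤ)) * (2 * (k : ℤ) - 2) * gammaP m (2 * (k : ℤ)) ^ (n - 1) := by
  obtain ⟨M, rfl⟩ : ∃ M, m = M + 3 := ⟨m - 3, by omega⟩
  obtain ⟨N, rfl⟩ : ∃ N, n = N + 1 := ⟨n - 1, by omega⟩
  rw [Nat.add_sub_cancel, show M + 3 - 1 = M + 2 from rfl, NbColUV_add_three, NbColUV_add_three,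
    gammaP_add_three M]
  ring

/-- Recursion for the zero-free chromatic polynomial of `B^{uv}(m,n)`, with `λ = 2k`:
`N^b(m,n) = (λ-1)·γ_{m-1}(λ)·N^b(m,n-1) + (-1)^m·λ(λ-2)·γ_m(λ)^{n-1}`. -/
theorem statement16 (m n : ℕ) (hm : 3 ≤ m) (hn : 2 ≤ n) (k : ℕ) (hk : 1 ≤ k) :
    (NbColUV m n k : ℤ) =
      (2 * (k : ℤ) - 1) * gammaP (m - 1) (2 * (k : ℤ)) * (NbColUV m (n - 1) k : ℤ) +
        (-1) ^ m * (2 * (k : ℤ)) * (2 * (k : ℤ) - 2) * gammaP m (2 * (k : ℤ)) ^ (n - 1) :=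
  statement16_general m n hm hn k
end

section
/- Let m ≥ 3, n ≥ 3, 2 ≤ l ≤ n−1 and k ≥ 1, and write λ = 2k. The number of proper colorings of the signed book graph (B(m,n), σ_l) with color set {−k,…,−1,1,…,k} equals γ_m(λ)^{n−l} times the number of proper colorings of B^{uv}(m,l) with color set {−k,…,−1,1,…,k}. -/
namespace BookGraph

open Finset

lemma prod_fin_ite_lt {M : Type*} [CommMonoid M] {n l : ℕ} (hl : l ≤ n) (x y : M) :
    ∏ i : Fin n, (if (i : ℕ) < l then x else y) = x ^ l * y ^ (n - l) := by
  obtain ⟨d, rfl⟩ := Nat.exists_eq_add_of_le hl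
  rw [Fin.prod_univ_eq_prod_range (fun i => if i < l then x else y), prod_range_add,
    prod_congr rfl fun i hi => if_pos (mem_range.1 hi),
    prod_congr rfl fun i _ => if_neg (by omega), prod_const, prod_const, card_range, card_range,
    Nat.add_sub_cancel_left]

lemma gammaP_three (x : ℤ) : gammaP 3 x = x - 2 := by
  rw [gammaP, sum_range_succ, sum_range_one]
  ring

lemma gammaP_succ {m : ℕ} (hm : 1 ≤ m) (x : ℤ) :
    gammaP (m + 1) x = (x - 1) * gammaP m x + (-1) ^ (m - 1) := by
  obtain ⟨m, rfl⟩ : ∃ m', m = m' + 1 := ⟨m - 1, by omega⟩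
  simp only [gammaP, Nat.add_sub_cancel, sum_range_succ, mul_sum]
  congr 1
  · refine sum_congr rfl fun i hi => ?_
    rw [show m + 1 + 1 - 2 - i = m + 1 - 2 - i + 1 by grind, pow_succ]
    ring
  · simp

noncomputable def symColors (k : ℕ) : Finset ℤ := (Icc (-k : ℤ) k).erase 0

lemma mem_symColors {k : ℕ} {x : ℤ} : x ∈ symColors k ↔ x ≠ 0 ∧ |x| ≤ k := by
  simp [symColors, abs_le, and_comm]

lemma neg_mem_symColors {k : ℕ} {x : ℤ} : -x ∈ symColors k ↔ x ∈ symColors k := by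
  simp [mem_symColors]

lemma card_symColors (k : ℕ) : #(symColors k) = 2 * k := by
  rw [symColors, card_erase_of_mem (by simp), Int.card_Icc]
  omega

section PathColorings

variable {α : Type*}

/-- `f` properly colors a path `f 0, …, f (t - 1)` whose first vertex is also adjacent to a vertex
colored `a` and whose last vertex is also adjacent to a vertex colored `b`. -/
def IsPathColoring {t : ℕ} (a b : α) (f : Fin t → α) : Prop :=
  (∀ j : Fin t, j.val = 0 → f j ≠ a) ∧ (∀ j : Fin t, j.val + 1 = t → f j ≠ b) ∧
    ∀ j j' : Fin t, j.val + 1 = j'.val → f j ≠ f j'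

instance [DecidableEq α] {t : ℕ} (a b : α) (f : Fin t → α) :
    Decidable (IsPathColoring a b f) := by
  unfold IsPathColoring
  infer_instance

lemma isPathColoring_snoc {t : ℕ} (ht : 1 ≤ t) {a b x : α} {f : Fin t → α} :
    IsPathColoring a b (Fin.snoc f x : Fin (t + 1) → α) ↔
      x ≠ b ∧ IsPathColoring a x f := by
  simp only [IsPathColoring, Fin.forall_fin_succ', Fin.snoc_castSucc, Fin.snoc_last,
    Fin.val_castSucc, Fin.val_last]
  constructor
  · rintro ⟨⟨ha, -⟩, ⟨-, hb⟩, hf, -, -⟩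
    exact ⟨hb trivial, ha, fun j hj => (hf j).2 hj, fun j j' h => (hf j).1 j' h⟩
  · rintro ⟨hb, ha, hx, hf⟩
    exact ⟨⟨ha, by omega⟩, ⟨fun i h => absurd h (by omega), fun _ => hb⟩,
      fun i => ⟨hf i, hx i⟩, fun i h => absurd h (by omega), by omega⟩

variable [DecidableEq α]

def pathColorings (S : Finset α) (a b : α) (t : ℕ) : Finset (Fin t → α) :=
  {f ∈ Fintype.piFinset fun _ => S | IsPathColoring a b f}

lemma mem_pathColorings_one {S : Finset α} {a b : α} {f : Fin 1 → α} :
    f ∈ pathColorings S a b 1 ↔ f 0 ∈ (S.erase b).erase a := by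
  simp only [pathColorings, IsPathColoring, mem_filter, Fintype.mem_piFinset, Fin.forall_fin_one,
    mem_erase, Fin.val_zero, Nat.zero_add, Nat.one_ne_zero, IsEmpty.forall_iff, forall_const,
    and_true]
  tauto

lemma card_pathColorings_one (S : Finset α) (a b : α) :
    #(pathColorings S a b 1) = #((S.erase b).erase a) :=
  card_nbij' (fun f => f 0) (fun x _ => x) (fun _ => mem_pathColorings_one.1)
    (fun _ hx => mem_pathColorings_one.2 hx)
    (fun f _ => funext fun j => by rw [Fin.fin_one_eq_zero j]) (fun _ _ => rfl)

lemma snoc_mem_pathColorings {S : Finset α} {a b x : α} {t : ℕ} (ht : 1 ≤ t)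
    {f : Fin t → α} :
    (Fin.snoc f x : Fin (t + 1) → α) ∈ pathColorings S a b (t + 1) ↔
      x ∈ S.erase b ∧ f ∈ pathColorings S a x t := by
  simp only [pathColorings, mem_filter, Fintype.mem_piFinset, Fin.forall_fin_succ',
    Fin.snoc_castSucc, Fin.snoc_last, isPathColoring_snoc ht, mem_erase]
  tauto

lemma card_pathColorings_succ (S : Finset α) (a b : α) {t : ℕ} (ht : 1 ≤ t) :
    #(pathColorings S a b (t + 1)) = ∑ x ∈ S.erase b, #(pathColorings S a x t) := by
  rw [← card_sigma]
  refine card_nbij' (fun g => ⟨g (Fin.last t), Fin.init g⟩) (fun p => Fin.snoc p.2 p.1)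
    (fun g hg => ?_) (fun p hp => (snoc_mem_pathColorings ht).2 (mem_sigma.1 hp))
    (fun g _ => by simp) (fun p _ => by simp)
  rw [mem_coe, ← Fin.snoc_init_self g, snoc_mem_pathColorings ht] at hg
  exact mem_sigma.2 hg

lemma card_pathColorings {S : Finset α} {a b : α} (ha : a ∈ S) (hb : b ∈ S) {t : ℕ}
    (ht : 1 ≤ t) :
    (#(pathColorings S a b t) : ℤ) =
      gammaP (t + 2) #S + if a = b then (-1) ^ (t + 1) else 0 := by
  induction t, ht using Nat.le_induction generalizing b with
  | base =>
    rw [card_pathColorings_one, gammaP_three]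
    split_ifs with hab
    · subst hab
      rw [erase_idem, card_erase_of_mem ha]
      push_cast [card_pos.2 ⟨a, ha⟩]
      ring
    · have h2 := card_pos.2 ⟨a, mem_erase.2 ⟨hab, ha⟩⟩
      rw [card_erase_of_mem hb] at h2
      rw [card_erase_of_mem (mem_erase.2 ⟨hab, ha⟩), card_erase_of_mem hb, Nat.sub_sub]
      push_cast [show 2 ≤ #S by omega]
      ring
  | succ t ht ih =>
    rw [card_pathColorings_succ S a b ht, Nat.cast_sum,
      sum_congr rfl fun x hx => ih (mem_of_mem_erase hx), sum_add_distrib, sum_const,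
      card_erase_of_mem hb, sum_ite_eq, gammaP_succ (m := t + 2) (by omega), nsmul_eq_mul,
      Nat.cast_sub (card_pos.2 ⟨b, hb⟩)]
    by_cases hab : a = b
    · subst hab
      simp [pow_succ]
    · simp [hab, ha]

end PathColorings

section Book

variable {m n : ℕ}

def bookSig (s : ℤ) (t : Fin n → ℤ) : BookVertex m n → BookVertex m n → ℤ
  | Sum.inl _, Sum.inl _ => s
  | Sum.inl false, Sum.inr (i, j) => if j.val = 0 then t i else 1
  | Sum.inr (i, j), Sum.inl false => if j.val = 0 then t i else 1
  | _, _ => 1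

lemma sigmaL_eq_bookSig (l : ℕ) :
    sigmaL m n l = bookSig 1 fun i => if i.val < l then -1 else 1 := by
  funext x y
  rcases x with ((_ | _) | ⟨i, j⟩) <;> rcases y with ((_ | _) | ⟨i', j'⟩) <;>
    simp only [sigmaL, bookSig] <;> split_ifs <;> simp_all

lemma sigmaUV_eq_bookSig : sigmaUV m n = bookSig (-1) 1 := by
  funext x y
  rcases x with ((_ | _) | ⟨i, j⟩) <;> rcases y with ((_ | _) | ⟨i', j'⟩) <;>
    simp [sigmaUV, bookSig]

variable {s : ℤ} {t : Fin n → ℤ}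

lemma proper_bookSig_iff (hs : s = 1 ∨ s = -1) (ht : ∀ i, t i = 1 ∨ t i = -1)
    {c : BookVertex m n → ℤ} :
    (∀ x y, bookAdj m n x y → c x ≠ bookSig s t x y * c y) ↔
      c (.inl false) ≠ s * c (.inl true) ∧
      ∀ i, IsPathColoring (t i * c (.inl false)) (c (.inl true)) fun j => c (.inr (i, j)) := by
  constructor
  · intro h
    refine ⟨h (.inl false) (.inl true) (by simp [bookAdj]),
      fun i => ⟨fun j hj => ?_, fun j hj => ?_, fun j j' hj => ?_⟩⟩
    · simpa [bookSig, hj] using h (.inr (i, j)) (.inl false) (by simp [bookAdj, hj])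
    · simpa [bookSig] using h (.inr (i, j)) (.inl true) (by simp [bookAdj]; omega)
    · simpa [bookSig] using h (.inr (i, j)) (.inr (i, j')) (by simp [bookAdj, hj])
  · rintro ⟨huv, hpage⟩ ((_ | _) | ⟨i, j⟩) ((_ | _) | ⟨i', j'⟩) hadj <;>
      simp only [bookAdj] at hadj <;> simp only [bookSig, one_mul]
    · exact absurd rfl hadj
    · exact huv
    · have h : c (.inr (i', j')) ≠ t i' * c (.inl false) := (hpage i').1 j' hadj
      rw [if_pos hadj]
      rcases ht i' with hi | hi <;> rw [hi] at h ⊢ <;> omega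
    · rcases hs with rfl | rfl <;> omega
    · exact absurd rfl hadj
    · exact ((hpage i').2.1 j' (by omega)).symm
    · rw [if_pos hadj]
      exact (hpage i).1 j hadj
    · exact (hpage i).2.1 j (by omega)
    · obtain ⟨rfl, hj | hj⟩ := hadj
      · exact (hpage i).2.2 j j' hj
      · exact ((hpage i).2.2 j' j hj).symm

def bookColoringEquiv (S : Finset ℤ) (hs : s = 1 ∨ s = -1) (ht : ∀ i, t i = 1 ∨ t i = -1) :
    {c : BookVertex m n → ℤ //
        (∀ x, c x ∈ S) ∧ ∀ x y, bookAdj m n x y → c x ≠ bookSig s t x y * c y} ≃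
      Σ p : ({p ∈ S ×ˢ S | p.1 ≠ s * p.2} : Finset (ℤ × ℤ)),
        ∀ i, pathColorings S (t i * p.1.1) p.1.2 (m - 2) where
  toFun c :=
    have hc := (proper_bookSig_iff hs ht).1 c.2.2
    ⟨⟨(c.1 (.inl false), c.1 (.inl true)), by simp [c.2.1, hc.1]⟩,
      fun i => ⟨fun j => c.1 (.inr (i, j)), by simp [pathColorings, c.2.1, hc.2 i]⟩⟩
  invFun p := ⟨Sum.elim (fun x => cond x p.1.1.2 p.1.1.1) (fun ij => (p.2 ij.1).1 ij.2), by
    have hp := mem_filter.1 p.1.2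
    have hF i := mem_filter.1 (p.2 i).2
    refine ⟨?_, (proper_bookSig_iff hs ht).2 ⟨hp.2, fun i => (hF i).2⟩⟩
    rintro ((_ | _) | ⟨i, j⟩)
    exacts [(mem_product.1 hp.1).1, (mem_product.1 hp.1).2, Fintype.mem_piFinset.1 (hF i).1 j]⟩
  left_inv c := by
    ext ((_ | _) | _) <;> rfl
  right_inv p := rfl

lemma card_bookColorings (S : Finset ℤ) (hs : s = 1 ∨ s = -1)
    (ht : ∀ i, t i = 1 ∨ t i = -1) :
    Nat.card {c : BookVertex m n → ℤ //
        (∀ x, c x ∈ S) ∧ ∀ x y, bookAdj m n x y → c x ≠ bookSig s t x y * c y} =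
      ∑ p ∈ S ×ˢ S with p.1 ≠ s * p.2,
        ∏ i, #(pathColorings S (t i * p.1) p.2 (m - 2)) := by
  simp only [Nat.card_congr (bookColoringEquiv S hs ht), Nat.card_sigma, Nat.card_pi,
    Nat.card_eq_finsetCard]
  exact sum_coe_sort {p ∈ S ×ˢ S | p.1 ≠ s * p.2}
    fun p => ∏ i, #(pathColorings S (t i * p.1) p.2 (m - 2))

end Book

end BookGraph

open BookGraph Finset in
theorem statement17_general (m n l : ℕ) (hm : 3 ≤ m) (hln : l ≤ n - 1) (k : ℕ) :
    (Nat.card {c : BookVertex m n → ℤ //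
        (∀ x, c x ≠ 0 ∧ |c x| ≤ (k : ℤ)) ∧
        ∀ x y, bookAdj m n x y → c x ≠ sigmaL m n l x y * c y} : ℤ) =
      gammaP m (2 * (k : ℤ)) ^ (n - l) *
        (Nat.card {c : BookVertex m l → ℤ //
          (∀ x, c x ≠ 0 ∧ |c x| ≤ (k : ℤ)) ∧
          ∀ x y, bookAdj m l x y → c x ≠ sigmaUV m l x y * c y} : ℤ) := by
  simp only [← mem_symColors, sigmaL_eq_bookSig, sigmaUV_eq_bookSig]
  set S := symColors k
  have hγ : ∀ a ∈ S, ∀ b ∈ S, a ≠ b →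
      (#(pathColorings S a b (m - 2)) : ℤ) = gammaP m (2 * k) := fun a ha b hb hab => by
    rw [card_pathColorings ha hb (by omega), if_neg hab, add_zero, Nat.sub_add_cancel (by omega),
      card_symColors, Nat.cast_mul, Nat.cast_ofNat]
  rw [card_bookColorings S (Or.inl rfl) (fun i => by split_ifs <;> simp),
    card_bookColorings S (t := 1) (Or.inr rfl) (fun _ => Or.inl rfl)]
  push_cast
  rw [mul_sum]
  refine sum_nbij' (fun p => (-p.1, p.2)) (fun p => (-p.1, p.2)) ?_ ?_ (by simp) (by simp) ?_
  iterate 2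
    rintro ⟨a, b⟩ hp
    simp only [mem_filter, mem_product, neg_mem_symColors, S] at hp ⊢
    exact ⟨hp.1, by omega⟩
  rintro ⟨a, b⟩ hp
  simp only [mem_filter, mem_product, one_mul] at hp
  simp only [ite_mul, neg_one_mul, one_mul, Pi.one_apply,
    apply_ite fun x => (#(pathColorings S x b (m - 2)) : ℤ), prod_fin_ite_lt (by omega : l ≤ n),
    hγ a hp.1.1 b hp.1.2 hp.2, Fin.prod_const]
  ring

/-- With `λ = 2k`, the number of zero-free proper colorings of `(B(m,n), σ_l)` with
color set `{-k, …, -1, 1, …, k}` equals `γ_m(λ)^{n-l}` times the number of zero-free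
proper colorings of `B^{uv}(m,l)` with that color set. -/
theorem statement17 (m n l : ℕ) (hm : 3 ≤ m) (hn : 3 ≤ n) (hl : 2 ≤ l) (hln : l ≤ n - 1)
    (k : ℕ) (hk : 1 ≤ k) :
    (Nat.card {c : BookVertex m n → ℤ //
        (∀ x, c x ≠ 0 ∧ |c x| ≤ (k : ℤ)) ∧
        ∀ x y, bookAdj m n x y → c x ≠ sigmaL m n l x y * c y} : ℤ) =
      gammaP m (2 * (k : ℤ)) ^ (n - l) *
        (Nat.card {c : BookVertex m l → ℤ //
          (∀ x, c x ≠ 0 ∧ |c x| ≤ (k : ℤ)) ∧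
          ∀ x y, bookAdj m l x y → c x ≠ sigmaUV m l x y * c y} : ℤ) :=
  statement17_general m n l hm hln k
end
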